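/- arXiv:1102.0582 — 4 statements merged into one kernel-verified Lean document; each statement's English description precedes it below -/
import Mathlib

section
/- One-step discrete maximum principle, lower bound (Lemma 4.1, part 1): Suppose the unknowns (p'_K)_{K∈𝒯}, (s'_K)_{K∈𝒯} satisfy, for every K ∈ 𝒯, the discrete gas equation |K|·φ_K·(ρ(p'_K)·s'_K − ρ(p_K)·s_K)/Δt − Σ_{L∈N(K)} τ_{K,L}·ρ_{K,L}·(β(s'_L) − β(s'_K)) + Σ_{L∈N(K)} ρ_{K,L}·G₁(s'_K, s'_L; τ_{K,L}·(p'_L − p'_K)) + Σ_{L∈N(K)} ( ρ(p'_K)²·M₁(s'_K)·g_{K,L} − ρ(p'_L)²·M₁(s'_L)·g_{L,K} ) + |K|·ρ(p'_K)·s'_K·f_{P,K} = 0. If s_K ≥ 0 for all K ∈ 𝒯, then s'_K ≥ 0 for all K ∈ 𝒯. -/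
/-- One-step discrete maximum principle, lower bound (Lemma 4.1, part 1). -/
theorem discrete_maximum_principle_lower_bound
    {ι : Type*} [Fintype ι]
    -- finite-volume graph
    (N : ι → Finset ι)
    (hNsymm : ∀ K L : ι, L ∈ N K ↔ K ∈ N L)
    (hNirrefl : ∀ K : ι, K ∉ N K)
    (vol φ : ι → ℝ)
    (hvol : ∀ K, 0 < vol K) (hφ : ∀ K, 0 < φ K)
    (τ : ι → ι → ℝ)
    (hτsymm : ∀ K L, τ K L = τ L K)
    (hτpos : ∀ K L, L ∈ N K → 0 < τ K L)
    -- time step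
    (Δt : ℝ) (hΔt : 0 < Δt)
    -- gravity coefficients
    (g : ι → ι → ℝ) (hg : ∀ K L, 0 ≤ g K L)
    -- symmetric interface densities
    (ρKL : ι → ι → ℝ)
    (hρKLsymm : ∀ K L, ρKL K L = ρKL L K)
    (hρKLpos : ∀ K L, 0 < ρKL K L)
    -- previous-step values
    (p s : ι → ℝ)
    -- density function
    (ρ : ℝ → ℝ) (ρm : ℝ) (hρm : 0 < ρm) (hρ : ∀ q, ρm ≤ ρ q)
    -- capillary function
    (β : ℝ → ℝ) (hβ : Monotone β)
    -- gas mobility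
    (M₁ : ℝ → ℝ) (hM₁nonneg : ∀ x, 0 ≤ M₁ x) (hM₁zero : ∀ x, x ≤ 0 → M₁ x = 0)
    -- production source term
    (fP : ι → ℝ) (hfP : ∀ K, 0 ≤ fP K)
    -- numerical convection flux
    (G₁ : ℝ → ℝ → ℝ → ℝ)
    (hG₁anti : ∀ a c : ℝ, Antitone fun b => G₁ a b c)
    (hG₁cons : ∀ a c : ℝ, G₁ a a c = -(M₁ a) * c)
    -- the unknowns, solving the discrete gas equation
    (p' s' : ι → ℝ)
    (hscheme : ∀ K : ι,
      vol K * φ K * (ρ (p' K) * s' K - ρ (p K) * s K) / Δt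
      - ∑ L ∈ N K, τ K L * ρKL K L * (β (s' L) - β (s' K))
      + ∑ L ∈ N K, ρKL K L * G₁ (s' K) (s' L) (τ K L * (p' L - p' K))
      + ∑ L ∈ N K, (ρ (p' K) ^ 2 * M₁ (s' K) * g K L - ρ (p' L) ^ 2 * M₁ (s' L) * g L K)
      + vol K * ρ (p' K) * s' K * fP K = 0)
    (hs : ∀ K, 0 ≤ s K) :
    ∀ K, 0 ≤ s' K := by
  by_contra h
  push_neg at h
  obtain ⟨K0, hK0⟩ := h
  obtain ⟨K, -, hKmin⟩ := Finset.exists_min_image Finset.univ s' ⟨K0, Finset.mem_univ K0⟩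
  have hKmin' : ∀ L, s' K ≤ s' L := fun L => hKmin L (Finset.mem_univ L)
  have hsK : s' K < 0 := lt_of_le_of_lt (hKmin' K0) hK0
  have hM0 : M₁ (s' K) = 0 := hM₁zero _ hsK.le
  have h1 : vol K * φ K * (ρ (p' K) * s' K - ρ (p K) * s K) / Δt < 0 := by
    apply div_neg_of_neg_of_pos _ hΔt
    have hρp : 0 < ρ (p' K) := lt_of_lt_of_le hρm (hρ _)
    have hρp2 : 0 < ρ (p K) := lt_of_lt_of_le hρm (hρ _)
    have ha : ρ (p' K) * s' K < 0 := mul_neg_of_pos_of_neg hρp hsK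
    have hb : 0 ≤ ρ (p K) * s K := mul_nonneg hρp2.le (hs K)
    have hc : 0 < vol K * φ K := mul_pos (hvol K) (hφ K)
    nlinarith
  have h2 : 0 ≤ ∑ L ∈ N K, τ K L * ρKL K L * (β (s' L) - β (s' K)) := by
    apply Finset.sum_nonneg
    intro L hL
    have hb := hβ (hKmin' L)
    exact mul_nonneg (mul_nonneg (hτpos K L hL).le (hρKLpos K L).le) (by linarith)
  have h3 : ∑ L ∈ N K, ρKL K L * G₁ (s' K) (s' L) (τ K L * (p' L - p' K)) ≤ 0 := by
    apply Finset.sum_nonpos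
    intro L hL
    have hle : G₁ (s' K) (s' L) (τ K L * (p' L - p' K))
        ≤ G₁ (s' K) (s' K) (τ K L * (p' L - p' K)) :=
      hG₁anti (s' K) (τ K L * (p' L - p' K)) (hKmin' L)
    rw [hG₁cons, hM0] at hle
    simp only [neg_zero, zero_mul] at hle
    have := hρKLpos K L
    nlinarith
  have h4 : ∑ L ∈ N K, (ρ (p' K) ^ 2 * M₁ (s' K) * g K L
      - ρ (p' L) ^ 2 * M₁ (s' L) * g L K) ≤ 0 := by
    apply Finset.sum_nonpos
    intro L hL
    rw [hM0]
    have : 0 ≤ ρ (p' L) ^ 2 * M₁ (s' L) * g L K :=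
      mul_nonneg (mul_nonneg (sq_nonneg _) (hM₁nonneg _)) (hg L K)
    linarith
  have h5 : vol K * ρ (p' K) * s' K * fP K ≤ 0 := by
    have hρp : 0 < ρ (p' K) := lt_of_lt_of_le hρm (hρ _)
    have hnp : vol K * ρ (p' K) * s' K ≤ 0 := by nlinarith [mul_pos (hvol K) hρp]
    exact mul_nonpos_of_nonpos_of_nonneg hnp (hfP K)
  linarith [hscheme K]
end

section
/- One-step discrete maximum principle, upper bound (Lemma 4.1, part 2): Suppose the unknowns (p'_K)_{K∈𝒯}, (s'_K)_{K∈𝒯} satisfy, for every K ∈ 𝒯, the discrete water equation |K|·φ_K·(s'_K − s_K)/Δt − Σ_{L∈N(K)} τ_{K,L}·(β(s'_L) − β(s'_K)) + Σ_{L∈N(K)} G₂(s'_K, s'_L; τ_{K,L}·(p'_L − p'_K)) + Σ_{L∈N(K)} ( ρ₂·M₂(s'_L)·g_{K,L} − ρ₂·M₂(s'_K)·g_{L,K} ) + |K|·(s'_K − 1)·f_{P,K} = −|K|·f_{I,K}. If s_K ≤ 1 for all K ∈ 𝒯, then s'_K ≤ 1 for all K ∈ 𝒯. -/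
/-- One-step discrete maximum principle, upper bound (Lemma 4.1, part 2). -/
theorem discrete_maximum_principle_upper_bound
    {ι : Type*} [Fintype ι]
    -- finite-volume graph
    (N : ι → Finset ι)
    (hNsymm : ∀ K L : ι, L ∈ N K ↔ K ∈ N L)
    (hNirrefl : ∀ K : ι, K ∉ N K)
    (vol φ : ι → ℝ)
    (hvol : ∀ K, 0 < vol K) (hφ : ∀ K, 0 < φ K)
    (τ : ι → ι → ℝ)
    (hτsymm : ∀ K L, τ K L = τ L K)
    (hτpos : ∀ K L, L ∈ N K → 0 < τ K L)
    -- time step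
    (Δt : ℝ) (hΔt : 0 < Δt)
    -- gravity coefficients
    (g : ι → ι → ℝ) (hg : ∀ K L, 0 ≤ g K L)
    -- constant water density
    (ρ₂ : ℝ) (hρ₂ : 0 ≤ ρ₂)
    -- previous-step values
    (p s : ι → ℝ)
    -- capillary function
    (β : ℝ → ℝ) (hβ : Monotone β)
    -- water mobility
    (M₂ : ℝ → ℝ) (hM₂nonneg : ∀ x, 0 ≤ M₂ x) (hM₂zero : ∀ x, 1 ≤ x → M₂ x = 0)
    -- source terms
    (fP fI : ι → ℝ) (hfP : ∀ K, 0 ≤ fP K) (hfI : ∀ K, 0 ≤ fI K)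
    -- numerical convection flux
    (G₂ : ℝ → ℝ → ℝ → ℝ)
    (hG₂anti : ∀ a c : ℝ, Antitone fun b => G₂ a b c)
    (hG₂cons : ∀ a c : ℝ, G₂ a a c = M₂ a * c)
    -- the unknowns, solving the discrete water equation
    (p' s' : ι → ℝ)
    (hscheme : ∀ K : ι,
      vol K * φ K * (s' K - s K) / Δt
      - ∑ L ∈ N K, τ K L * (β (s' L) - β (s' K))
      + ∑ L ∈ N K, G₂ (s' K) (s' L) (τ K L * (p' L - p' K))
      + ∑ L ∈ N K, (ρ₂ * M₂ (s' L) * g K L - ρ₂ * M₂ (s' K) * g L K)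
      + vol K * (s' K - 1) * fP K = -(vol K * fI K))
    (hs : ∀ K, s K ≤ 1) :
    ∀ K, s' K ≤ 1 := by

  intro K
  by_contra hK
  push_neg at hK
  obtain ⟨M, -, hM⟩ := Finset.exists_max_image (Finset.univ : Finset ι) s'
    ⟨K, Finset.mem_univ K⟩
  have hM1 : 1 < s' M := lt_of_lt_of_le hK (hM K (Finset.mem_univ K))
  have hMzero : M₂ (s' M) = 0 := hM₂zero _ hM1.le
  have hsch := hscheme M
  have h1 : 0 < vol M * φ M * (s' M - s M) / Δt := by
    apply div_pos _ hΔt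
    exact mul_pos (mul_pos (hvol M) (hφ M))
      (sub_pos.2 (lt_of_le_of_lt (hs M) hM1))
  have h2 : ∑ L ∈ N M, τ M L * (β (s' L) - β (s' M)) ≤ 0 := by
    apply Finset.sum_nonpos
    intro L hL
    exact mul_nonpos_of_nonneg_of_nonpos (hτpos M L hL).le
      (sub_nonpos.2 (hβ (hM L (Finset.mem_univ L))))
  have h3 : 0 ≤ ∑ L ∈ N M, G₂ (s' M) (s' L) (τ M L * (p' L - p' M)) := by
    apply Finset.sum_nonneg
    intro L hL
    have := hG₂anti (s' M) (τ M L * (p' L - p' M)) (hM L (Finset.mem_univ L))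
    simp only at this
    calc (0 : ℝ) = M₂ (s' M) * (τ M L * (p' L - p' M)) := by rw [hMzero]; ring
      _ = G₂ (s' M) (s' M) (τ M L * (p' L - p' M)) :=
          (hG₂cons (s' M) (τ M L * (p' L - p' M))).symm
      _ ≤ G₂ (s' M) (s' L) (τ M L * (p' L - p' M)) := this
  have h4 : 0 ≤ ∑ L ∈ N M, (ρ₂ * M₂ (s' L) * g M L - ρ₂ * M₂ (s' M) * g L M) := by
    apply Finset.sum_nonneg
    intro L hL
    rw [hMzero]
    have : 0 ≤ ρ₂ * M₂ (s' L) * g M L :=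
      mul_nonneg (mul_nonneg hρ₂ (hM₂nonneg _)) (hg M L)
    linarith
  have h5 : 0 ≤ vol M * (s' M - 1) * fP M :=
    mul_nonneg (mul_nonneg (hvol M).le (by linarith)) (hfP M)
  have h6 : 0 ≤ vol M * fI M := mul_nonneg (hvol M).le (hfI M)
  linarith
end

section
/- Key convexity inequality for the discrete energy estimate (inequality (4.4)): For all p, p* ∈ ℝ and all s, s* ≥ 0, one has ( ρ(p)·s − ρ(p*)·s* )·p + (s − s*)·( H(p) − ρ(p)·p ) ≥ H(p)·s − H(p*)·s*. -/
lemma rho_lower_bound (ρ : ℝ → ℝ) (hρc : Continuous ρ) (hρmono : Monotone ρ)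
    (a b : ℝ) : ρ a * (b - a) ≤ ∫ ζ in a..b, ρ ζ := by
  rcases le_total a b with h | h
  · have h1 : ∫ ζ in a..b, ρ a ≤ ∫ ζ in a..b, ρ ζ := by
      apply intervalIntegral.integral_mono_on h (by simp)
        (hρc.intervalIntegrable a b)
      intro x hx; exact hρmono hx.1
    simpa [mul_comm] using h1
  · have h1 : ∫ ζ in b..a, ρ ζ ≤ ∫ ζ in b..a, ρ a := by
      apply intervalIntegral.integral_mono_on h (hρc.intervalIntegrable b a) (by simp)
      intro x hx; exact hρmono hx.2
    have h2 : (∫ ζ in b..a, ρ a) = ρ a * (a - b) := by simp [mul_comm]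
    have h3 : (∫ ζ in a..b, ρ ζ) = -∫ ζ in b..a, ρ ζ := intervalIntegral.integral_symm b a
    nlinarith [h1, h2]

/-- Key convexity inequality for the discrete energy estimate (inequality (4.4)). -/
theorem key_convexity_inequality
    (ρ : ℝ → ℝ) (hρc : Continuous ρ) (hρmono : Monotone ρ)
    (g H : ℝ → ℝ)
    (hg : ∀ q : ℝ, g q = -∫ ζ in (0:ℝ)..q, ρ ζ)
    (hH : ∀ q : ℝ, H q = g q + ρ q * q) :
    ∀ p pstar s sstar : ℝ, 0 ≤ s → 0 ≤ sstar →
      H p * s - H pstar * sstar ≤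
        (ρ p * s - ρ pstar * sstar) * p + (s - sstar) * (H p - ρ p * p) := by
  intro p pstar s sstar hs hsstar
  have key : g p - g pstar ≤ -(ρ pstar * (p - pstar)) := by
    have h1 := rho_lower_bound ρ hρc hρmono pstar p
    have h2 : (∫ ζ in (0:ℝ)..p, ρ ζ) = (∫ ζ in (0:ℝ)..pstar, ρ ζ) +
        ∫ ζ in pstar..p, ρ ζ := by
      rw [intervalIntegral.integral_add_adjacent_intervals
        (hρc.intervalIntegrable 0 pstar) (hρc.intervalIntegrable pstar p)]
    rw [hg p, hg pstar, h2]
    linarith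
  rw [hH p, hH pstar]
  nlinarith [mul_le_mul_of_nonneg_left key hsstar]
end

section
/- Minty-type identification of the nonlinear limit (used to prove (7.8)): Let (X, μ) be a finite measure space, let ρ : ℝ → ℝ be continuous, bounded and nondecreasing, and let U, p, c ∈ L²(μ) with c ≥ 0 μ-almost everywhere. Suppose that for every w ∈ L²(μ) and every δ ∈ (0, 1], ∫_X ( U − c·ρ(p + δ·w) )·w dμ ≥ 0. Then U = c·ρ(p) μ-almost everywhere. -/
/-!
Minty's trick: letting `δ → 0⁺` in the hypothesis, by dominated convergence (`ρ` is continuous and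
bounded, so the integrands are dominated by `|U w| + C |c w|`), gives `0 ≤ ∫ (U - c ρ(p)) w` for
every `w ∈ L²`. Testing with `w = -(U - c ρ(p))` forces `∫ (U - c ρ(p))² = 0`.
-/

open MeasureTheory Filter Topology

section

variable {X : Type*} [MeasurableSpace X] {μ : Measure X}

lemma MeasureTheory.MemLp.mul_comp_of_abs_le {q : ENNReal} {c p : X → ℝ} {ρ : ℝ → ℝ} {C : ℝ}
    (hc : MemLp c q μ) (hp : AEStronglyMeasurable p μ) (hρc : Continuous ρ)
    (hρbd : ∀ x, |ρ x| ≤ C) : MemLp (fun x => c x * ρ (p x)) q μ :=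
  hc.of_le_mul (c := C) (hc.1.mul (hρc.comp_aestronglyMeasurable hp)) <| ae_of_all _ fun x => by
    rw [norm_mul, mul_comm, Real.norm_eq_abs (ρ _)]
    exact mul_le_mul_of_nonneg_right (hρbd _) (norm_nonneg _)

lemma tendsto_integral_sub_mul_comp_add_smul {U c p w : X → ℝ} {ρ : ℝ → ℝ} {C : ℝ}
    (hρc : Continuous ρ) (hρbd : ∀ x, |ρ x| ≤ C) (hU : MemLp U 2 μ) (hc : MemLp c 2 μ)
    (hp : AEStronglyMeasurable p μ) (hw : MemLp w 2 μ) :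
    Tendsto (fun δ : ℝ => ∫ x, (U x - c x * ρ (p x + δ * w x)) * w x ∂μ) (𝓝 0)
      (𝓝 (∫ x, (U x - c x * ρ (p x)) * w x ∂μ)) := by
  refine tendsto_integral_filter_of_dominated_convergence (fun x => |U x * w x| + C * |c x * w x|)
    (Eventually.of_forall fun δ => ?_) (Eventually.of_forall fun δ => ae_of_all _ fun x => ?_)
    ((hU.integrable_mul hw).abs.add ((hc.integrable_mul hw).abs.const_mul C))
    (ae_of_all _ fun x => ?_)
  · exact (hU.1.sub (hc.1.mul (hρc.comp_aestronglyMeasurable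
      (hp.add (hw.1.const_mul δ))))).mul hw.1
  · calc ‖(U x - c x * ρ (p x + δ * w x)) * w x‖
        = |U x * w x - c x * w x * ρ (p x + δ * w x)| := by rw [Real.norm_eq_abs]; ring_nf
      _ ≤ |U x * w x| + |c x * w x| * |ρ (p x + δ * w x)| := by rw [← abs_mul]; exact abs_sub _ _
      _ ≤ |U x * w x| + C * |c x * w x| := by
        rw [mul_comm C]; gcongr; exact hρbd _
  · have harg : Tendsto (fun δ : ℝ => p x + δ * w x) (𝓝 0) (𝓝 (p x)) := by
      simpa using ((tendsto_id (x := 𝓝 (0 : ℝ))).mul_const (w x)).const_add (p x)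
    exact (tendsto_const_nhds.sub (tendsto_const_nhds.mul ((hρc.tendsto _).comp harg))).mul
      tendsto_const_nhds

lemma ae_eq_zero_of_forall_integral_mul_nonneg {f : X → ℝ} (hf : MemLp f 2 μ)
    (h : ∀ w : X → ℝ, MemLp w 2 μ → 0 ≤ ∫ x, f x * w x ∂μ) : f =ᵐ[μ] 0 := by
  have hsq : ∫ x, f x * f x ∂μ = 0 := by
    have hneg := h (fun x => -f x) hf.neg
    simp only [mul_neg, integral_neg] at hneg
    exact le_antisymm (neg_nonneg.mp hneg) (integral_nonneg fun x => mul_self_nonneg _)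
  filter_upwards [(integral_eq_zero_iff_of_nonneg (fun x => mul_self_nonneg (f x))
    (hf.integrable_mul hf)).mp hsq] with x hx
  exact mul_self_eq_zero.mp hx

end

theorem minty_identification_general
    {X : Type*} [MeasurableSpace X] (μ : Measure X)
    (ρ : ℝ → ℝ) (hρc : Continuous ρ)
    (Cb : ℝ) (hρbd : ∀ x : ℝ, |ρ x| ≤ Cb)
    (U p c : X → ℝ)
    (hU : MemLp U 2 μ) (hp : MemLp p 2 μ) (hc : MemLp c 2 μ)
    (h : ∀ w : X → ℝ, MemLp w 2 μ → ∀ δ : ℝ, 0 < δ → δ ≤ 1 →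
      0 ≤ ∫ x, (U x - c x * ρ (p x + δ * w x)) * w x ∂μ) :
    U =ᵐ[μ] fun x => c x * ρ (p x) := by
  have hf : MemLp (fun x => U x - c x * ρ (p x)) 2 μ :=
    hU.sub (hc.mul_comp_of_abs_le hp.1 hρc hρbd)
  have hlim : ∀ w : X → ℝ, MemLp w 2 μ → 0 ≤ ∫ x, (U x - c x * ρ (p x)) * w x ∂μ :=
    fun w hw => ge_of_tendsto
      ((tendsto_integral_sub_mul_comp_add_smul hρc hρbd hU hc hp.1 hw).mono_left
        nhdsWithin_le_nhds)
      (eventually_of_mem (Ioo_mem_nhdsGT one_pos) fun δ hδ => h w hw δ hδ.1 hδ.2.le)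
  filter_upwards [ae_eq_zero_of_forall_integral_mul_nonneg hf hlim] with x hx
  exact sub_eq_zero.mp hx

/-- Minty-type identification of the nonlinear limit (used to prove (7.8)). -/
theorem minty_identification
    {X : Type*} [MeasurableSpace X] (μ : Measure X) [IsFiniteMeasure μ]
    (ρ : ℝ → ℝ) (hρc : Continuous ρ) (hρmono : Monotone ρ)
    (Cb : ℝ) (hρbd : ∀ x : ℝ, |ρ x| ≤ Cb)
    (U p c : X → ℝ)
    (hU : MemLp U 2 μ) (hp : MemLp p 2 μ) (hc : MemLp c 2 μ)
    (hcnonneg : 0 ≤ᵐ[μ] c)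
    (h : ∀ w : X → ℝ, MemLp w 2 μ → ∀ δ : ℝ, 0 < δ → δ ≤ 1 →
      0 ≤ ∫ x, (U x - c x * ρ (p x + δ * w x)) * w x ∂μ) :
    U =ᵐ[μ] fun x => c x * ρ (p x) :=
  minty_identification_general μ ρ hρc Cb hρbd U p c hU hp hc h
end
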